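/- arXiv:2307.15618 — 2 statements merged into one kernel-verified Lean document; each statement's English description precedes it below -/
import Mathlib

section
/- For 1 < p < N, the best constant in the critical Sobolev embedding satisfies S_{N,p} = N ω_N^{p/N} ((N-p)/(p-1))^{p-1} (Γ(N/p) Γ(1+N−N/p)/Γ(N))^{p/N}, and lim_{p→1⁺} S_{N,p} = N ω_N^{1/N}, where ω_N = π^{N/2}/Γ(1+N/2) is the volume of the unit ball in ℝ^N. -/
/-!
All factors except `((N - p) / (p - 1)) ^ (p - 1)` are continuous at `p = 1`, and the Gamma
quotient equals `Γ(N) Γ(1) / Γ(N) = 1` there. The remaining factor splits as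
`(N - p) ^ (p - 1) / (p - 1) ^ (p - 1)`, whose numerator tends to `(N - 1) ^ 0 = 1` and whose
denominator is `x ^ x` with `x = p - 1 → 0⁺`, which tends to `1` because `x log x → 0`.
-/

open MeasureTheory Filter Topology Real Set ENNReal

noncomputable section

abbrev Euc (N : ℕ) := EuclideanSpace ℝ (Fin N)

/-- Divergence of a vector field on `ℝ^N`. -/
def divg {N : ℕ} (φ : Euc N → Euc N) (x : Euc N) : ℝ :=
  ∑ i, fderiv ℝ φ x (EuclideanSpace.single i (1:ℝ)) i

/-- Total variation `|Du|(U)` of a function `u` over an open set `U`. -/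
def totalVar {N : ℕ} (U : Set (Euc N)) (u : Euc N → ℝ) : ℝ≥0∞ :=
  sSup {r : ℝ≥0∞ | ∃ φ : Euc N → Euc N, ContDiff ℝ 1 φ ∧ HasCompactSupport φ ∧
    tsupport φ ⊆ U ∧ (∀ x, ‖φ x‖ ≤ 1) ∧ r = ENNReal.ofReal (∫ x in U, u x * divg φ x)}

/-- Perimeter of a set in `ℝ^N`. -/
def perim {N : ℕ} (E : Set (Euc N)) : ℝ≥0∞ :=
  totalVar Set.univ (Set.indicator E (fun _ => (1:ℝ)))

/-- The Cheeger constant of `Ω`. -/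
def cheeger {N : ℕ} (Ω : Set (Euc N)) : ℝ :=
  sInf {r : ℝ | ∃ E : Set (Euc N), E ⊆ closure Ω ∧ 0 < volume E ∧
    r = (perim E).toReal / (volume E).toReal}

/-- The Sobolev-type constant `λ_{p,q}(Ω)`. -/
def lam {N : ℕ} (Ω : Set (Euc N)) (p q : ℝ) : ℝ :=
  sInf {r : ℝ | ∃ u : Euc N → ℝ, ContDiff ℝ 1 u ∧ HasCompactSupport u ∧ tsupport u ⊆ Ω ∧
    (∫ x in Ω, |u x| ^ q) = 1 ∧ r = ∫ x in Ω, ‖fderiv ℝ u x‖ ^ p}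

/-- sup-norm over `Ω`. -/
def supn {N : ℕ} (Ω : Set (Euc N)) (u : Euc N → ℝ) : ℝ := sSup (u '' Ω)

/-- `u` is a weak solution of `-div(|∇u|^{p-2}∇u) = f(u)` in `Ω`. -/
def IsWeakSol {N : ℕ} (Ω : Set (Euc N)) (p : ℝ) (f : ℝ → ℝ) (u : Euc N → ℝ) : Prop :=
  ∀ φ : Euc N → ℝ, ContDiff ℝ 1 φ → HasCompactSupport φ → tsupport φ ⊆ Ω →
    (∫ x in Ω, ‖gradient u x‖ ^ (p - 2) * (inner ℝ (gradient u x) (gradient φ x) : ℝ)) =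
      ∫ x in Ω, f (u x) * φ x

lemma tendsto_rpow_self_nhdsGT_zero : Tendsto (fun x : ℝ => x ^ x) (𝓝[>] 0) (𝓝 1) := by
  have h := (tendsto_log_mul_rpow_nhdsGT_zero zero_lt_one).rexp
  rw [exp_zero] at h
  refine h.congr' ?_
  filter_upwards [self_mem_nhdsWithin] with x hx
  rw [Real.rpow_one, rpow_def_of_pos hx]

lemma Real.continuousAt_Gamma_of_pos {x : ℝ} (hx : 0 < x) : ContinuousAt Gamma x :=
  (differentiableAt_Gamma fun m => by linarith [(m.cast_nonneg : (0 : ℝ) ≤ m)]).continuousAt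

lemma tendsto_div_sub_one_rpow_sub_one {c : ℝ} (hc : 1 < c) :
    Tendsto (fun p : ℝ => ((c - p) / (p - 1)) ^ (p - 1)) (𝓝[>] 1) (𝓝 1) := by
  have hnum : Tendsto (fun p : ℝ => (c - p) ^ (p - 1)) (𝓝[>] 1) (𝓝 1) := by
    have h : ContinuousAt (fun p : ℝ => (c - p) ^ (p - 1)) 1 :=
      (continuousAt_const.sub continuousAt_id).rpow (continuousAt_id.sub continuousAt_const)
        (Or.inl (by simp [sub_eq_zero, hc.ne']))
    simpa using h.tendsto.mono_left nhdsWithin_le_nhds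
  have hsub : Tendsto (fun p : ℝ => p - 1) (𝓝[>] 1) (𝓝[>] 0) := by
    refine tendsto_nhdsWithin_of_tendsto_nhds_of_eventually_within _ ?_ ?_
    · simpa using (continuous_sub_right (1 : ℝ)).continuousWithinAt.tendsto (s := Ioi 1) (x := 1)
    · filter_upwards [self_mem_nhdsWithin] with p hp using sub_pos.mpr (mem_Ioi.mp hp)
  have hden := tendsto_rpow_self_nhdsGT_zero.comp hsub
  have hquot : Tendsto (fun p : ℝ => (c - p) ^ (p - 1) / (p - 1) ^ (p - 1)) (𝓝[>] 1) (𝓝 1) := by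
    have h := hnum.div hden one_ne_zero
    rwa [div_one] at h
  refine hquot.congr' ?_
  filter_upwards [Ioo_mem_nhdsGT hc] with p hp
  rw [div_rpow (by linarith [hp.2]) (by linarith [hp.1])]

lemma tendsto_Gamma_div_mul_Gamma_one_add_sub_div {a : ℝ} (ha : 0 < a) :
    Tendsto (fun p : ℝ => Gamma (a / p) * Gamma (1 + a - a / p) / Gamma a) (𝓝 1) (𝓝 1) := by
  have hdiv : ContinuousAt (fun p : ℝ => a / p) 1 :=
    continuousAt_const.div continuousAt_id one_ne_zero
  have h₁ : ContinuousAt (fun p : ℝ => Gamma (a / p)) 1 :=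
    (continuousAt_Gamma_of_pos (by simpa using ha)).comp hdiv
  have h₂ : ContinuousAt (fun p : ℝ => Gamma (1 + a - a / p)) 1 :=
    (continuousAt_Gamma_of_pos (by simp)).comp (continuousAt_const.sub hdiv)
  simpa [(Gamma_pos_of_pos ha).ne'] using ((h₁.mul h₂).div_const (Gamma a)).tendsto

/-- the explicit critical Sobolev constant tends to `N ω_N^{1/N}` as `p → 1⁺`. -/
theorem stmt1 {N : ℕ} (hN : 2 ≤ N) :
    Tendsto (fun p : ℝ =>
      (N : ℝ) * (π ^ ((N : ℝ) / 2) / Real.Gamma (1 + (N : ℝ) / 2)) ^ (p / N) *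
        (((N : ℝ) - p) / (p - 1)) ^ (p - 1) *
        (Real.Gamma ((N : ℝ) / p) * Real.Gamma (1 + (N : ℝ) - (N : ℝ) / p) /
          Real.Gamma (N : ℝ)) ^ (p / N))
      (𝓝[>] (1:ℝ))
      (𝓝 ((N : ℝ) * (π ^ ((N : ℝ) / 2) / Real.Gamma (1 + (N : ℝ) / 2)) ^ ((1:ℝ) / N))) := by
  have hN₁ : (1 : ℝ) < N := by exact_mod_cast hN
  set ω : ℝ := π ^ ((N : ℝ) / 2) / Gamma (1 + (N : ℝ) / 2)
  have hω : 0 < ω := div_pos (rpow_pos_of_pos pi_pos _) (Gamma_pos_of_pos (by positivity))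
  have hexp : Tendsto (fun p : ℝ => p / N) (𝓝 1) (𝓝 (1 / N)) := tendsto_id.div_const _
  have hvol : Tendsto (fun p : ℝ => (N : ℝ) * ω ^ (p / N)) (𝓝 1) (𝓝 (N * ω ^ ((1 : ℝ) / N))) :=
    ((continuousAt_const_rpow hω.ne').tendsto.comp hexp).const_mul _
  have hGamma : Tendsto (fun p : ℝ => (Gamma (N / p) * Gamma (1 + N - N / p) / Gamma N) ^ (p / N))
      (𝓝 1) (𝓝 1) := by
    simpa using (tendsto_Gamma_div_mul_Gamma_one_add_sub_div (by linarith)).rpow hexp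
      (Or.inl one_ne_zero)
  simpa using ((hvol.mono_left nhdsWithin_le_nhds).mul (tendsto_div_sub_one_rpow_sub_one hN₁)).mul
    (hGamma.mono_left nhdsWithin_le_nhds)
end
end

section
/- Picone-type energy comparison: let Ω be bounded smooth, 1 < p < N, p < q < Np/(N−p), let w ∈ W_0^{1,p}(Ω) be a positive weak solution of −div(|∇w|^{p−2}∇w) = w^{q−1}, and let e_p be the L^∞-normalized first Dirichlet p-Laplacian eigenfunction with eigenvalue λ_{p,p}. Then ∫_Ω w^{q−p} e_p^p dx ≤ λ_{p,p} ∫_Ω e_p^p dx; in particular ‖w‖_∞^{q−p} ∫_Ω (w/‖w‖_∞)^{q−p} e_p^p dx ≤ λ_{p,p} ∫_Ω e_p^p dx. -/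
open MeasureTheory Filter Topology Real Set ENNReal

noncomputable section

open scoped RealInnerProductSpace Gradient

/-!
Let `σ_a = ramp a` be a C¹ ramp vanishing on `(-∞, a]` whose slope `θ_a = rampSlope a` lies in
`[0, 1]`, so that `θ_a^p ≤ θ_a`. Test the equation of `w` with `σ_a(e)^p (w + a)^{1-p}` and that
of `e` with `σ_a(e)`; both are admissible because they vanish on `{e < a}`, a neighbourhood of the
complement of a compact subset of `Ω`. Picone's inequality for `u = σ_a(e)` and `v = w + a` gives
`∫ w^{q-1} σ_a(e)^p (w + a)^{1-p} ≤ ∫ |∇σ_a(e)|^p ≤ ∫ θ_a(e) |∇e|^p = λ ∫ e^{p-1} σ_a(e) ≤ λ ∫ e^p`,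
and letting `a → 0⁺`, with `w^{q-p} e^p` as dominating function, gives the first inequality.
The second one is the first, written with `w = ‖w‖_∞ · (w / ‖w‖_∞)`.
-/

section Gradient

variable {F : Type*} [NormedAddCommGroup F] [InnerProductSpace ℝ F] [CompleteSpace F]
  {f g : F → ℝ} {f' g' : F} {x : F}

theorem HasGradientAt.mul (hf : HasGradientAt f f' x) (hg : HasGradientAt g g' x) :
    HasGradientAt (fun y => f y * g y) (f x • g' + g x • f') x := by
  rw [hasGradientAt_iff_hasFDerivAt] at *
  refine (hf.fun_mul hg).congr_fderiv ?_
  ext v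
  simp [InnerProductSpace.toDual_apply_apply]

theorem HasDerivAt.comp_hasGradientAt {h : ℝ → ℝ} {h' : ℝ} (hh : HasDerivAt h h' (f x))
    (hf : HasGradientAt f f' x) : HasGradientAt (fun y => h (f y)) (h' • f') x := by
  rw [hasGradientAt_iff_hasFDerivAt] at *
  refine (hh.comp_hasFDerivAt x hf).congr_fderiv ?_
  ext v
  simp [InnerProductSpace.toDual_apply_apply]

theorem ContDiffOn.continuousOn_gradient {s : Set F} (hf : ContDiffOn ℝ 1 f s) (hs : IsOpen s) :
    ContinuousOn (∇ f) s :=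
  (InnerProductSpace.toDual ℝ F).symm.continuous.comp_continuousOn
    (hf.continuousOn_fderiv_of_isOpen hs le_rfl)

theorem measurable_gradient [MeasurableSpace F] [BorelSpace F] [FiniteDimensional ℝ F]
    (f : F → ℝ) : Measurable (∇ f) :=
  (InnerProductSpace.toDual ℝ F).symm.continuous.measurable.comp (measurable_fderiv ℝ f)

end Gradient

theorem IsOpen.continuous_of_continuousOn_closure {X M : Type*} [TopologicalSpace X]
    [TopologicalSpace M] [Zero M] {s : Set X} {f : X → M} (hs : IsOpen s)
    (hf : ContinuousOn f (closure s)) (h0 : ∀ x ∉ s, f x = 0) : Continuous f := by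
  classical
  have hpiece : s.piecewise f 0 = f := funext fun x => by by_cases hx : x ∈ s <;> simp [hx, h0]
  exact hpiece ▸ continuous_piecewise (fun x hx => h0 x (hs.frontier_eq ▸ hx).2) hf
    continuousOn_const

theorem ContDiffOn.contDiff_of_tsupport_subset {𝕜 E F : Type*} [NontriviallyNormedField 𝕜]
    [NormedAddCommGroup E] [NormedSpace 𝕜 E] [NormedAddCommGroup F] [NormedSpace 𝕜 F]
    {n : WithTop ℕ∞} {f : E → F} {U : Set E} (hU : IsOpen U) (hf : ContDiffOn 𝕜 n f U)
    (hsupp : tsupport f ⊆ U) : ContDiff 𝕜 n f :=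
  contDiff_iff_contDiffAt.2 fun x => by
    by_cases hx : x ∈ U
    · exact hf.contDiffAt (hU.mem_nhds hx)
    · exact contDiffAt_const.congr_of_eventuallyEq
        (notMem_tsupport_iff_eventuallyEq.1 fun h => hx (hsupp h))

theorem Continuous.integrableOn_of_isBounded {X E : Type*} [MetricSpace X] [ProperSpace X]
    [MeasurableSpace X] [OpensMeasurableSpace X] {μ : Measure X} [IsFiniteMeasureOnCompacts μ]
    [NormedAddCommGroup E] {f : X → E} {s : Set X} (hf : Continuous f)
    (hs : Bornology.IsBounded s) : IntegrableOn f s μ :=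
  (hf.continuousOn.integrableOn_compact hs.isCompact_closure).mono_set subset_closure

lemma rpow_mul_setIntegral_div_rpow_le {α : Type*} [MeasurableSpace α] {μ : Measure α}
    {s : Set α} {g u : α → ℝ} {r M C : ℝ} (hs : MeasurableSet s) (hr : r ≠ 0) (hM : 0 ≤ M)
    (hC : 0 ≤ C) (hu : ∀ x ∈ s, 0 ≤ u x) (h : ∫ x in s, u x ^ r * g x ∂μ ≤ C) :
    M ^ r * ∫ x in s, (u x / M) ^ r * g x ∂μ ≤ C := by
  rcases hM.eq_or_lt with rfl | hM
  · simpa [Real.zero_rpow hr] using hC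
  rw [← integral_const_mul]
  refine (le_of_eq (setIntegral_congr_fun hs fun x hx => ?_)).trans h
  rw [Real.div_rpow (hu x hx) hM.le, ← mul_assoc, mul_div_cancel₀ _ (by positivity)]

namespace PiconeComparison

def rampSlope (a t : ℝ) : ℝ := smoothTransition (t / a - 1)

def ramp (a t : ℝ) : ℝ := ∫ s in (0 : ℝ)..t, rampSlope a s

section Ramp

variable {a t : ℝ}

lemma continuous_rampSlope (a : ℝ) : Continuous (rampSlope a) :=
  smoothTransition.continuous.comp (by fun_prop)

lemma rampSlope_nonneg (a t : ℝ) : 0 ≤ rampSlope a t := smoothTransition.nonneg _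

lemma rampSlope_le_one (a t : ℝ) : rampSlope a t ≤ 1 := smoothTransition.le_one _

lemma rampSlope_eq_zero (ha : 0 < a) (h : t ≤ a) : rampSlope a t = 0 :=
  smoothTransition.zero_of_nonpos <| by rw [sub_nonpos, div_le_one ha]; exact h

lemma rampSlope_eq_one (ha : 0 < a) (h : 2 * a ≤ t) : rampSlope a t = 1 :=
  smoothTransition.one_of_one_le <| by rw [le_sub_iff_add_le, le_div_iff₀ ha]; linarith

lemma intervalIntegrable_rampSlope (a b c : ℝ) : IntervalIntegrable (rampSlope a) volume b c :=
  (continuous_rampSlope a).intervalIntegrable b c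

lemma hasDerivAt_ramp (a t : ℝ) : HasDerivAt (ramp a) (rampSlope a t) t :=
  intervalIntegral.integral_hasDerivAt_right (intervalIntegrable_rampSlope a 0 t)
    ((continuous_rampSlope a).stronglyMeasurableAtFilter _ _) (continuous_rampSlope a).continuousAt

lemma contDiff_ramp (a : ℝ) : ContDiff ℝ 1 (ramp a) :=
  contDiff_one_iff_deriv.2 ⟨fun t => (hasDerivAt_ramp a t).differentiableAt, by
    simpa only [funext fun t => (hasDerivAt_ramp a t).deriv] using continuous_rampSlope a⟩

lemma ramp_eq_zero (ha : 0 < a) (h : t ≤ a) : ramp a t = 0 := by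
  refine (intervalIntegral.integral_congr fun s hs => ?_).trans intervalIntegral.integral_zero
  exact rampSlope_eq_zero ha (hs.2.trans (max_le ha.le h))

lemma ramp_nonneg (ha : 0 < a) (t : ℝ) : 0 ≤ ramp a t := by
  rcases le_total t 0 with ht | ht
  · rw [ramp_eq_zero ha (ht.trans ha.le)]
  · exact intervalIntegral.integral_nonneg ht fun s _ => rampSlope_nonneg a s

lemma ramp_le (ht : 0 ≤ t) : ramp a t ≤ t := by
  simpa [ramp] using intervalIntegral.integral_mono_on ht (intervalIntegrable_rampSlope a 0 t)
    intervalIntegrable_const fun s _ => rampSlope_le_one a s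

lemma sub_two_mul_le_ramp (ha : 0 < a) (t : ℝ) : t - 2 * a ≤ ramp a t := by
  rcases le_total t (2 * a) with ht | ht
  · linarith [ramp_nonneg ha t]
  · have hslope : ramp a t - ramp a (2 * a) = t - 2 * a := by
      rw [ramp, ramp, intervalIntegral.integral_interval_sub_left
        (intervalIntegrable_rampSlope a 0 t) (intervalIntegrable_rampSlope a 0 (2 * a)),
        intervalIntegral.integral_congr fun s hs => rampSlope_eq_one ha (uIcc_of_le ht ▸ hs).1]
      simp
    linarith [ramp_nonneg ha (2 * a)]

lemma tendsto_ramp (ht : 0 ≤ t) : Tendsto (fun a => ramp a t) (𝓝[>] 0) (𝓝 t) := by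
  have hlow : Tendsto (fun a => t - 2 * a) (𝓝[>] 0) (𝓝 t) := by
    have h : Continuous fun a : ℝ => t - 2 * a := by fun_prop
    exact (h.tendsto' 0 t (by simp)).mono_left nhdsWithin_le_nhds
  exact tendsto_of_tendsto_of_tendsto_of_le_of_le' hlow tendsto_const_nhds
    (eventually_nhdsWithin_of_forall fun a ha => sub_two_mul_le_ramp ha t)
    (Eventually.of_forall fun a => ramp_le ht)

end Ramp

section Picone

variable {F : Type*} [NormedAddCommGroup F] [InnerProductSpace ℝ F] {p : ℝ}

lemma young_inequality_rpow_sub_one (hp : 1 < p) {X Y : ℝ} (hX : 0 ≤ X) (hY : 0 ≤ Y) :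
    p * (X ^ (p - 1) * Y) ≤ (p - 1) * X ^ p + Y ^ p := by
  have hp0 : 0 < p := by linarith
  have hp1 : 0 < p - 1 := by linarith
  have h := Real.young_inequality_of_nonneg (Real.rpow_nonneg hX (p - 1)) hY
    (Real.HolderConjugate.conjExponent hp).symm
  rw [Real.conjExponent, ← Real.rpow_mul hX, mul_div_cancel₀ _ hp1.ne',
    show X ^ p / (p / (p - 1)) = (p - 1) / p * X ^ p by field_simp] at h
  calc p * (X ^ (p - 1) * Y) ≤ p * ((p - 1) / p * X ^ p + Y ^ p / p) := by gcongr
    _ = (p - 1) * X ^ p + Y ^ p := by field_simp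

lemma abs_norm_rpow_sub_two_mul_inner_le (hp : p ≠ 1) (u v : F) :
    |‖u‖ ^ (p - 2) * ⟪u, v⟫| ≤ ‖u‖ ^ (p - 1) * ‖v‖ := by
  rw [abs_mul, abs_of_nonneg (Real.rpow_nonneg (norm_nonneg u) _)]
  calc ‖u‖ ^ (p - 2) * |⟪u, v⟫| ≤ ‖u‖ ^ (p - 2) * (‖u‖ * ‖v‖) := by
        gcongr
        exact abs_real_inner_le_norm u v
    _ = ‖u‖ ^ (p - 1) * ‖v‖ := by
        rw [← mul_assoc, ← Real.rpow_add_one' (norm_nonneg u) (by contrapose! hp; linarith)]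
        ring_nf

lemma rpow_sub_two_mul_sq (hp : p ≠ 0) {r : ℝ} (hr : 0 ≤ r) : r ^ (p - 2) * r ^ 2 = r ^ p := by
  rw [← Real.rpow_two, ← Real.rpow_add' hr (by simpa using hp)]
  ring_nf

variable [CompleteSpace F]

lemma picone_gradient (hp : 1 < p) {u v : F → ℝ} {x : F} (hu : DifferentiableAt ℝ u x)
    (hv : DifferentiableAt ℝ v x) (hu0 : 0 ≤ u x) (hv0 : 0 < v x) :
    ‖∇ v x‖ ^ (p - 2) * ⟪∇ v x, ∇ (fun y => u y ^ p * v y ^ (1 - p)) x⟫ ≤ ‖∇ u x‖ ^ p := by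
  have hup : HasGradientAt (fun y => u y ^ p) ((p * u x ^ (p - 1)) • ∇ u x) x :=
    (Real.hasDerivAt_rpow_const (Or.inr hp.le)).comp_hasGradientAt hu.hasGradientAt
  have hvp : HasGradientAt (fun y => v y ^ (1 - p)) (((1 - p) * v x ^ (1 - p - 1)) • ∇ v x) x :=
    (Real.hasDerivAt_rpow_const (Or.inl hv0.ne')).comp_hasGradientAt hv.hasGradientAt
  rw [(hup.mul hvp).gradient]
  simp only [inner_add_right, real_inner_smul_right, real_inner_self_eq_norm_sq]
  set U := ∇ u x
  set V := ∇ v x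
  set X := u x / v x * ‖V‖ with hX
  have hXp : X ^ p = u x ^ p * v x ^ (1 - p - 1) * ‖V‖ ^ p := by
    rw [hX, Real.mul_rpow (by positivity) (norm_nonneg V), Real.div_rpow hu0 hv0.le,
      show 1 - p - 1 = -p by ring, Real.rpow_neg hv0.le, div_eq_mul_inv]
  have hXp1 : X ^ (p - 1) = u x ^ (p - 1) * v x ^ (1 - p) * ‖V‖ ^ (p - 1) := by
    rw [hX, Real.mul_rpow (by positivity) (norm_nonneg V), Real.div_rpow hu0 hv0.le,
      show 1 - p = -(p - 1) by ring, Real.rpow_neg hv0.le, div_eq_mul_inv]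
  have hinner : ‖V‖ ^ (p - 2) * ⟪V, U⟫ ≤ ‖V‖ ^ (p - 1) * ‖U‖ :=
    (le_abs_self _).trans (abs_norm_rpow_sub_two_mul_inner_le hp.ne' V U)
  have hcoef : 0 ≤ p * u x ^ (p - 1) * v x ^ (1 - p) := by positivity
  calc ‖V‖ ^ (p - 2) * (u x ^ p * ((1 - p) * v x ^ (1 - p - 1) * ‖V‖ ^ 2)
        + v x ^ (1 - p) * (p * u x ^ (p - 1) * ⟪V, U⟫))
      = (1 - p) * (u x ^ p * v x ^ (1 - p - 1) * (‖V‖ ^ (p - 2) * ‖V‖ ^ 2))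
        + p * u x ^ (p - 1) * v x ^ (1 - p) * (‖V‖ ^ (p - 2) * ⟪V, U⟫) := by ring
    _ ≤ (1 - p) * X ^ p + p * u x ^ (p - 1) * v x ^ (1 - p) * (‖V‖ ^ (p - 1) * ‖U‖) := by
      rw [rpow_sub_two_mul_sq (by positivity) (norm_nonneg V), hXp]
      gcongr
    _ = (1 - p) * X ^ p + p * (X ^ (p - 1) * ‖U‖) := by rw [hXp1]; ring
    _ ≤ ‖U‖ ^ p := by
      linarith [young_inequality_rpow_sub_one hp (by positivity : 0 ≤ X) (norm_nonneg U)]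

lemma gradient_ramp_comp {a : ℝ} {e : F → ℝ} {x : F} (he : DifferentiableAt ℝ e x) :
    ∇ (fun y => ramp a (e y)) x = rampSlope a (e x) • ∇ e x :=
  ((hasDerivAt_ramp a (e x)).comp_hasGradientAt he.hasGradientAt).gradient

end Picone

variable {N : ℕ} {Ω : Set (Euc N)} {p q a : ℝ} {e w : Euc N → ℝ} {f : ℝ → ℝ}

lemma lam_nonneg (Ω : Set (Euc N)) (p q : ℝ) : 0 ≤ lam Ω p q :=
  Real.sInf_nonneg <| by
    rintro r ⟨u, -, -, -, -, rfl⟩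
    exact integral_nonneg fun x => by positivity

section Superlevel

lemma setOf_le_subset (ha : 0 < a) (he0 : ∀ x ∉ Ω, e x = 0) : {x | a ≤ e x} ⊆ Ω :=
  fun x hx => by_contra fun hxΩ => by simp only [mem_ofPred_eq, he0 x hxΩ] at hx; linarith

lemma isCompact_setOf_le (hΩb : Bornology.IsBounded Ω) (he : Continuous e) (ha : 0 < a)
    (he0 : ∀ x ∉ Ω, e x = 0) : IsCompact {x | a ≤ e x} :=
  hΩb.isCompact_closure.of_isClosed_subset (isClosed_le continuous_const he)
    ((setOf_le_subset ha he0).trans subset_closure)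

lemma tsupport_subset_setOf_le (he : Continuous e) {φ : Euc N → ℝ}
    (hφ0 : ∀ x, e x < a → φ x = 0) : tsupport φ ⊆ {x | a ≤ e x} :=
  closure_minimal (fun x hx => not_lt.1 fun h => hx (hφ0 x h)) (isClosed_le continuous_const he)

lemma gradient_eq_zero_of_lt (he : Continuous e) {φ : Euc N → ℝ}
    (hφ0 : ∀ x, e x < a → φ x = 0) {x : Euc N} (hx : e x < a) : ∇ φ x = 0 := by
  have hev : φ =ᶠ[𝓝 x] fun _ => 0 :=
    eventually_of_mem ((isOpen_lt he continuous_const).mem_nhds hx) hφ0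
  rw [hev.gradient_eq, gradient_fun_const]

lemma integrableOn_of_eq_zero_of_lt (hΩo : IsOpen Ω) (hΩb : Bornology.IsBounded Ω)
    (he : Continuous e) (ha : 0 < a) (he0 : ∀ x ∉ Ω, e x = 0) {g : Euc N → ℝ}
    (hg : ContinuousOn g Ω) (hg0 : ∀ x, e x < a → g x = 0) : IntegrableOn g Ω :=
  ((hg.mono (setOf_le_subset ha he0)).integrableOn_compact
    (isCompact_setOf_le hΩb he ha he0)).of_forall_sdiff_eq_zero hΩo.measurableSet
    fun x hx => hg0 x (not_le.1 hx.2)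

lemma integrableOn_energy_pairing (hΩo : IsOpen Ω) (hΩb : Bornology.IsBounded Ω) (hp : 1 < p)
    (he : Continuous e) (ha : 0 < a) (he0 : ∀ x ∉ Ω, e x = 0) {u φ : Euc N → ℝ}
    (hu : ContDiffOn ℝ 1 u Ω) (hφ : ContDiffOn ℝ 1 φ Ω) (hφ0 : ∀ x, e x < a → φ x = 0) :
    IntegrableOn (fun x => ‖∇ u x‖ ^ (p - 2) * ⟪∇ u x, ∇ φ x⟫) Ω := by
  refine Integrable.mono' (g := fun x => ‖∇ u x‖ ^ (p - 1) * ‖∇ φ x‖) ?_ ?_ ?_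
  · refine integrableOn_of_eq_zero_of_lt hΩo hΩb he ha he0 ?_ fun x hx => ?_
    · exact ((hu.continuousOn_gradient hΩo).norm.rpow_const fun _ _ => Or.inr (by linarith)).mul
        (hφ.continuousOn_gradient hΩo).norm
    · simp [gradient_eq_zero_of_lt he hφ0 hx]
  · exact ((measurable_gradient u).norm.pow_const _).mul
      ((measurable_gradient u).inner (measurable_gradient φ)) |>.aestronglyMeasurable
  · exact Eventually.of_forall fun x => abs_norm_rpow_sub_two_mul_inner_le hp.ne' _ _

lemma _root_.IsWeakSol.integral_eq_of_eq_zero_of_lt {u : Euc N → ℝ} (hu : IsWeakSol Ω p f u)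
    (hΩo : IsOpen Ω) (hΩb : Bornology.IsBounded Ω) (he : Continuous e) (ha : 0 < a)
    (he0 : ∀ x ∉ Ω, e x = 0) {φ : Euc N → ℝ} (hφ : ContDiffOn ℝ 1 φ Ω)
    (hφ0 : ∀ x, e x < a → φ x = 0) :
    ∫ x in Ω, ‖∇ u x‖ ^ (p - 2) * ⟪∇ u x, ∇ φ x⟫ = ∫ x in Ω, f (u x) * φ x := by
  have hsupp := tsupport_subset_setOf_le he hφ0
  exact hu φ (hφ.contDiff_of_tsupport_subset hΩo (hsupp.trans (setOf_le_subset ha he0)))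
    ((isCompact_setOf_le hΩb he ha he0).of_isClosed_subset (isClosed_tsupport φ) hsupp)
    (hsupp.trans (setOf_le_subset ha he0))

end Superlevel

lemma setIntegral_picone_le (hΩo : IsOpen Ω) (hΩb : Bornology.IsBounded Ω) (hp : 1 < p)
    (ha : 0 < a) (hw : ContDiffOn ℝ 1 w Ω) (hwnn : ∀ x ∈ Ω, 0 ≤ w x)
    (hwsol : IsWeakSol Ω p f w) (he : Continuous e) (he' : ContDiffOn ℝ 1 e Ω)
    (he0 : ∀ x ∉ Ω, e x = 0) :
    ∫ x in Ω, f (w x) * (ramp a (e x) ^ p * (w x + a) ^ (1 - p)) ≤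
      ∫ x in Ω, rampSlope a (e x) * ‖∇ e x‖ ^ p := by
  set φ : Euc N → ℝ := fun x => ramp a (e x) ^ p * (w x + a) ^ (1 - p)
  have hφ0 : ∀ x, e x < a → φ x = 0 := fun x hx => by
    simp [φ, ramp_eq_zero ha hx.le, Real.zero_rpow (by linarith : p ≠ 0)]
  have hφ : ContDiffOn ℝ 1 φ Ω :=
    (((contDiff_ramp a).rpow_const_of_le (by simpa using hp.le)).comp_contDiffOn he').mul
      ((hw.add contDiffOn_const).rpow_const_of_ne fun x hx => by linarith [hwnn x hx])
  rw [← hwsol.integral_eq_of_eq_zero_of_lt hΩo hΩb he ha he0 hφ hφ0]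
  refine setIntegral_mono_on ?_ ?_ hΩo.measurableSet fun x hx => ?_
  · exact integrableOn_energy_pairing hΩo hΩb hp he ha he0 hw hφ hφ0
  · refine integrableOn_of_eq_zero_of_lt hΩo hΩb he ha he0 ?_ fun x hx => ?_
    · exact ((continuous_rampSlope a).comp he).continuousOn.mul
        ((he'.continuousOn_gradient hΩo).norm.rpow_const fun _ _ => Or.inr (by linarith))
    · simp [rampSlope_eq_zero ha hx.le]
  have hex := (he'.differentiableOn one_ne_zero).differentiableAt (hΩo.mem_nhds hx)
  have hwx := (hw.differentiableOn one_ne_zero).differentiableAt (hΩo.mem_nhds hx)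
  have hv : ∇ (fun y => w y + a) x = ∇ w x := by simp only [gradient, fderiv_add_const]
  have hθ := rampSlope_nonneg a (e x)
  calc ‖∇ w x‖ ^ (p - 2) * ⟪∇ w x, ∇ φ x⟫
      ≤ ‖∇ (fun y => ramp a (e y)) x‖ ^ p :=
        hv ▸ picone_gradient hp ((contDiff_ramp a).differentiable one_ne_zero _ |>.comp x hex)
          (hwx.add_const a) (ramp_nonneg ha _) (by linarith [hwnn x hx])
    _ = rampSlope a (e x) ^ p * ‖∇ e x‖ ^ p := by
      rw [gradient_ramp_comp hex, norm_smul, Real.norm_of_nonneg hθ,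
        Real.mul_rpow hθ (norm_nonneg _)]
    _ ≤ rampSlope a (e x) * ‖∇ e x‖ ^ p := by
      gcongr
      simpa using Real.rpow_le_rpow_of_exponent_ge' hθ (rampSlope_le_one a _) zero_le_one hp.le

lemma setIntegral_rampSlope_mul_eq (hΩo : IsOpen Ω) (hΩb : Bornology.IsBounded Ω) (hp : p ≠ 0)
    (ha : 0 < a) (he : Continuous e) (he' : ContDiffOn ℝ 1 e Ω) (he0 : ∀ x ∉ Ω, e x = 0)
    (hesol : IsWeakSol Ω p f e) :
    ∫ x in Ω, rampSlope a (e x) * ‖∇ e x‖ ^ p = ∫ x in Ω, f (e x) * ramp a (e x) := by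
  rw [← hesol.integral_eq_of_eq_zero_of_lt (φ := fun x => ramp a (e x)) hΩo hΩb he ha he0
    ((contDiff_ramp a).comp_contDiffOn he') fun x hx => ramp_eq_zero ha hx.le]
  refine setIntegral_congr_fun hΩo.measurableSet fun x hx => ?_
  rw [gradient_ramp_comp ((he'.differentiableOn one_ne_zero).differentiableAt (hΩo.mem_nhds hx)),
    real_inner_smul_right, real_inner_self_eq_norm_sq, mul_left_comm,
    rpow_sub_two_mul_sq hp (norm_nonneg _)]

lemma setIntegral_cutoff_le (hΩo : IsOpen Ω) (hΩb : Bornology.IsBounded Ω) (hp : 1 < p)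
    (ha : 0 < a) (hw : ContDiffOn ℝ 1 w Ω) (hwnn : ∀ x ∈ Ω, 0 ≤ w x)
    (hwsol : IsWeakSol Ω p f w) (he : Continuous e) (he' : ContDiffOn ℝ 1 e Ω)
    (he0 : ∀ x ∉ Ω, e x = 0) (henn : ∀ x ∈ Ω, 0 ≤ e x) {Λ : ℝ} (hΛ : 0 ≤ Λ)
    (hesol : IsWeakSol Ω p (fun t => Λ * t ^ (p - 1)) e) :
    ∫ x in Ω, f (w x) * (ramp a (e x) ^ p * (w x + a) ^ (1 - p)) ≤ Λ * ∫ x in Ω, e x ^ p := by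
  have hcont (r : ℝ) (hr : 0 ≤ r) : Continuous fun x => e x ^ r :=
    he.rpow_const fun _ => Or.inr hr
  calc ∫ x in Ω, f (w x) * (ramp a (e x) ^ p * (w x + a) ^ (1 - p))
      ≤ ∫ x in Ω, rampSlope a (e x) * ‖∇ e x‖ ^ p :=
        setIntegral_picone_le hΩo hΩb hp ha hw hwnn hwsol he he' he0
    _ = ∫ x in Ω, Λ * e x ^ (p - 1) * ramp a (e x) :=
        setIntegral_rampSlope_mul_eq hΩo hΩb (by linarith) ha he he' he0 hesol
    _ ≤ ∫ x in Ω, Λ * e x ^ p := by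
      refine setIntegral_mono_on
        (((continuous_const.mul (hcont _ (by linarith))).mul
          ((contDiff_ramp a).continuous.comp he)).integrableOn_of_isBounded hΩb)
        ((continuous_const.mul (hcont _ (by linarith))).integrableOn_of_isBounded hΩb)
        hΩo.measurableSet fun x hx => ?_
      calc Λ * e x ^ (p - 1) * ramp a (e x) ≤ Λ * e x ^ (p - 1) * e x := by
            gcongr
            · exact mul_nonneg hΛ (Real.rpow_nonneg (henn x hx) _)
            · exact ramp_le (henn x hx)
        _ = Λ * e x ^ p := by
          rw [mul_assoc, ← Real.rpow_add_one' (henn x hx) (by linarith), sub_add_cancel]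
    _ = Λ * ∫ x in Ω, e x ^ p := integral_const_mul Λ _

lemma tendsto_setIntegral_cutoff (hΩo : IsOpen Ω) (hΩb : Bornology.IsBounded Ω) (hp : 1 < p)
    (hpq : p ≤ q) (hwc : Continuous w) (hwpos : ∀ x ∈ Ω, 0 < w x) (he : Continuous e)
    (henn : ∀ x ∈ Ω, 0 ≤ e x) :
    Tendsto (fun a => ∫ x in Ω, w x ^ (q - 1) * (ramp a (e x) ^ p * (w x + a) ^ (1 - p)))
      (𝓝[>] 0) (𝓝 (∫ x in Ω, w x ^ (q - p) * e x ^ p)) := by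
  have hsplit : ∀ x ∈ Ω, w x ^ (q - 1) * (e x ^ p * w x ^ (1 - p)) = w x ^ (q - p) * e x ^ p :=
    fun x hx => by rw [show q - p = (q - 1) + (1 - p) by ring, Real.rpow_add (hwpos x hx)]; ring
  refine tendsto_integral_filter_of_dominated_convergence (fun x => w x ^ (q - p) * e x ^ p)
    ?_ ?_ (((hwc.rpow_const fun _ => Or.inr (by linarith)).mul
      (he.rpow_const fun _ => Or.inr (by linarith))).integrableOn_of_isBounded hΩb)
    ((ae_restrict_iff' hΩo.measurableSet).2 (Eventually.of_forall fun x hx => ?_))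
  · exact Eventually.of_forall fun a => ((hwc.measurable.pow_const _).mul
      ((((contDiff_ramp a).continuous.comp he).measurable.pow_const _).mul
        ((hwc.measurable.add_const a).pow_const _))).aestronglyMeasurable
  · refine eventually_nhdsWithin_of_forall fun a (ha : 0 < a) =>
      (ae_restrict_iff' hΩo.measurableSet).2 (Eventually.of_forall fun x hx => ?_)
    have hwx := hwpos x hx
    have hex := henn x hx
    have hramp := ramp_nonneg ha (e x)
    rw [Real.norm_of_nonneg (by positivity), ← hsplit x hx]
    refine mul_le_mul_of_nonneg_left (mul_le_mul ?_ ?_ (by positivity) (by positivity))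
      (by positivity)
    · exact Real.rpow_le_rpow hramp (ramp_le hex) (by linarith)
    · exact Real.rpow_le_rpow_of_nonpos hwx (by linarith) (by linarith)
  · have hwa : Tendsto (fun a => w x + a) (𝓝[>] 0) (𝓝 (w x)) := by
      simpa using ((continuous_const_add (w x)).tendsto 0).mono_left nhdsWithin_le_nhds
    rw [← hsplit x hx]
    exact tendsto_const_nhds.mul
      (((tendsto_ramp (henn x hx)).rpow_const (Or.inr (by linarith))).mul
        (hwa.rpow_const (Or.inl (hwpos x hx).ne')))

theorem setIntegral_rpow_mul_rpow_le (hΩo : IsOpen Ω) (hΩb : Bornology.IsBounded Ω)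
    (hp : 1 < p) (hpq : p ≤ q) (hwc : Continuous w) (hw : ContDiffOn ℝ 1 w Ω)
    (hwpos : ∀ x ∈ Ω, 0 < w x) (hwsol : IsWeakSol Ω p (fun t => t ^ (q - 1)) w)
    (he : Continuous e) (he' : ContDiffOn ℝ 1 e Ω) (he0 : ∀ x ∉ Ω, e x = 0)
    (henn : ∀ x ∈ Ω, 0 ≤ e x) {Λ : ℝ} (hΛ : 0 ≤ Λ)
    (hesol : IsWeakSol Ω p (fun t => Λ * t ^ (p - 1)) e) :
    ∫ x in Ω, w x ^ (q - p) * e x ^ p ≤ Λ * ∫ x in Ω, e x ^ p :=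
  le_of_tendsto (tendsto_setIntegral_cutoff hΩo hΩb hp hpq hwc hwpos he henn)
    (eventually_nhdsWithin_of_forall fun _ ha => setIntegral_cutoff_le hΩo hΩb hp ha hw
      (fun x hx => (hwpos x hx).le) hwsol he he' he0 henn hΛ hesol)

end PiconeComparison

open PiconeComparison in
theorem stmt17_general {N : ℕ} (Ω : Set (Euc N)) (hΩo : IsOpen Ω)
    (hΩb : Bornology.IsBounded Ω)
    (p q : ℝ) (hp : 1 < p) (hpq : p < q)
    (w : Euc N → ℝ) (hwreg : ContDiffOn ℝ 1 w (closure Ω))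
    (hw0 : ∀ x ∉ Ω, w x = 0) (hwpos : ∀ x ∈ Ω, 0 < w x)
    (hwsol : IsWeakSol Ω p (fun t => t ^ (q - 1)) w)
    (e : Euc N → ℝ) (hereg : ContDiffOn ℝ 1 e (closure Ω))
    (he0 : ∀ x ∉ Ω, e x = 0) (hepos : ∀ x ∈ Ω, 0 < e x)
    (hesol : IsWeakSol Ω p (fun t => lam Ω p p * t ^ (p - 1)) e) :
    (∫ x in Ω, w x ^ (q - p) * e x ^ p) ≤ lam Ω p p * ∫ x in Ω, e x ^ p ∧
      supn Ω w ^ (q - p) * ∫ x in Ω, (w x / supn Ω w) ^ (q - p) * e x ^ p ≤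
        lam Ω p p * ∫ x in Ω, e x ^ p := by
  have hΛ := lam_nonneg Ω p p
  have hmain := setIntegral_rpow_mul_rpow_le hΩo hΩb hp hpq.le
    (hΩo.continuous_of_continuousOn_closure hwreg.continuousOn hw0)
    (hwreg.mono subset_closure) hwpos hwsol
    (hΩo.continuous_of_continuousOn_closure hereg.continuousOn he0)
    (hereg.mono subset_closure) he0 (fun x hx => (hepos x hx).le) hΛ hesol
  have hsup : 0 ≤ supn Ω w := Real.sSup_nonneg <| by
    rintro _ ⟨x, hx, rfl⟩
    exact (hwpos x hx).le
  have hrhs : 0 ≤ lam Ω p p * ∫ x in Ω, e x ^ p :=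
    mul_nonneg hΛ (setIntegral_nonneg hΩo.measurableSet fun x hx => Real.rpow_nonneg (hepos x hx).le _)
  exact ⟨hmain, rpow_mul_setIntegral_div_rpow_le hΩo.measurableSet (by linarith) hsup hrhs
    (fun x hx => (hwpos x hx).le) hmain⟩

/-- Picone-type energy comparison between a positive Lane-Emden solution
and the normalized first eigenfunction. -/
theorem stmt17 {N : ℕ} (hN : 2 ≤ N) (Ω : Set (Euc N)) (hΩo : IsOpen Ω)
    (hΩb : Bornology.IsBounded Ω) (hΩne : Ω.Nonempty)
    (p q : ℝ) (hp : 1 < p) (hpN : p < N) (hpq : p < q) (hq : q < N * p / (N - p))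
    (w : Euc N → ℝ) (hwreg : ContDiffOn ℝ 1 w (closure Ω))
    (hw0 : ∀ x ∉ Ω, w x = 0) (hwpos : ∀ x ∈ Ω, 0 < w x)
    (hwsol : IsWeakSol Ω p (fun t => t ^ (q - 1)) w)
    (e : Euc N → ℝ) (hereg : ContDiffOn ℝ 1 e (closure Ω))
    (he0 : ∀ x ∉ Ω, e x = 0) (hepos : ∀ x ∈ Ω, 0 < e x)
    (henorm : supn Ω e = 1)
    (hesol : IsWeakSol Ω p (fun t => lam Ω p p * t ^ (p - 1)) e) :
    (∫ x in Ω, w x ^ (q - p) * e x ^ p) ≤ lam Ω p p * ∫ x in Ω, e x ^ p ∧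
      supn Ω w ^ (q - p) * ∫ x in Ω, (w x / supn Ω w) ^ (q - p) * e x ^ p ≤
        lam Ω p p * ∫ x in Ω, e x ^ p :=
  stmt17_general Ω hΩo hΩb p q hp hpq w hwreg hw0 hwpos hwsol e hereg he0 hepos hesol
end
end
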